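/- arXiv:2507.14793 — 2 statements merged into one kernel-verified Lean document; each statement's English description precedes it below -/
import Mathlib

section
/- There exists a recurrent system that is equivariant with respect to static group transformations but not flow equivariant. Concretely, let G = (ℤ, +) act on itself, and define h_{t+1}[f](x) = h_t[f](x) + f_t(x) with h₀ = 0. Then h_t[g·f] = g·h_t[f] for every constant shift g ∈ ℤ, but there exist an input f and a nonzero velocity ν ∈ ℤ such that h_t[ψ(ν)·f] ≠ ψ_{t-1}(ν)·h_t[f], where (ψ(ν)·f)_t(x) := f_t(x − tν). For example with f_t = δ₀ (the indicator of 0) for all t and ν = 1: h₂[ψ(ν)·f] = δ₀ + δ₁ which is not a translate of h₂[f] = 2·δ₀. -/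
/-- The additive recurrence `h_{t+1} = h_t + f_t` on signals over `ℤ` is
equivariant to static shifts, but not flow equivariant: there is an input `f`,
nonzero velocity `ν`, and time `t` with `h_t[ψ(ν)·f] ≠ ψ_{t-1}(ν)·h_t[f]`. -/
theorem grnn_not_flow_equivariant
    (h : (ℕ → ℤ → ℝ) → ℕ → ℤ → ℝ)
    (h0 : ∀ f, h f 0 = fun _ => 0)
    (hrec : ∀ f t, h f (t + 1) = fun x => h f t x + f t x) :
    (∀ (g : ℤ) (f : ℕ → ℤ → ℝ) (t : ℕ),
        h (fun s x => f s (x - g)) t = fun x => h f t (x - g)) ∧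
    (∃ (f : ℕ → ℤ → ℝ) (ν : ℤ) (t : ℕ), ν ≠ 0 ∧
        h (fun s x => f s (x - (s : ℤ) * ν)) t
          ≠ fun x => h f t (x - ((t : ℤ) - 1) * ν)) := by
  constructor
  · intro g f t
    induction t with
    | zero => rw [h0, h0]
    | succ n ih => rw [hrec, hrec, ih]
  · refine ⟨fun _ x => if x = 0 then 1 else 0, 1, 2, one_ne_zero, ?_⟩
    intro heq
    have := congrFun heq 1
    simp only [hrec, h0] at this
    norm_num at this
end

section
/- Consider the FERNN recurrence over the translation group G = (ℤ, +) and abelian velocity group V ⊆ ℤ: h_{t+1}[f](ν, x) = σ(h_t[f](ν, x − ν) + E(f_t)(x)), where E : (ℤ → ℝ) → (ℤ → ℝ) is translation-equivariant (E(q·u)(x) = E(u)(x − q)), σ : ℝ → ℝ is applied pointwise, and h₀ ≡ 0. Then for any input flow generator ν̂ ∈ V with (ψ(ν̂)·f)_t(x) := f_t(x − tν̂), the FERNN is flow equivariant: h_t[ψ(ν̂)·f](ν, x) = h_t[f](ν − ν̂, x − (t−1)ν̂) for all t ≥ 1, ν ∈ V, x ∈ ℤ (with V assumed closed under subtraction by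 ν̂). -/
/-- The FERNN over the translation group `ℤ` with velocity subgroup `V ⊆ ℤ` is
flow equivariant: `h_t[ψ(ν₀)·f](ν, x) = h_t[f](ν−ν₀, x−(t−1)ν₀)` for `t ≥ 1`. -/
theorem fernn_flow_equivariant (V : AddSubgroup ℤ) (σ : ℝ → ℝ)
    (E : (ℤ → ℝ) → (ℤ → ℝ))
    (hE : ∀ (q : ℤ) (u : ℤ → ℝ) (x : ℤ), E (fun y => u (y - q)) x = E u (x - q))
    (h : (ℕ → ℤ → ℝ) → ℕ → ℤ → ℤ → ℝ)
    (h0 : ∀ f ν x, h f 0 ν x = 0)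
    (hrec : ∀ f t ν x, h f (t + 1) ν x = σ (h f t ν (x - ν) + E (f t) x))
    (f : ℕ → ℤ → ℝ) (ν₀ : ℤ) (hν₀ : ν₀ ∈ V) (t : ℕ) (ht : 1 ≤ t)
    (ν : ℤ) (hν : ν ∈ V) (x : ℤ) :
    h (fun s y => f s (y - (s : ℤ) * ν₀)) t ν x
      = h f t (ν - ν₀) (x - ((t : ℤ) - 1) * ν₀) := by
  induction t generalizing x with
  | zero => omega
  | succ n ih =>
    rcases Nat.eq_zero_or_pos n with hn | hn
    · subst hn
      rw [hrec, hrec, h0, h0]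
      have : E (fun y => f 0 (y - (0 : ℤ) * ν₀)) x = E (f 0) x := by
        have := hE ((0 : ℤ) * ν₀) (f 0) x
        simpa using this
      simp [this]
    · rw [hrec, hrec, ih hn]
      have hEeq : E (fun y => f n (y - (n : ℤ) * ν₀)) x = E (f n) (x - (n : ℤ) * ν₀) :=
        hE ((n : ℤ) * ν₀) (f n) x
      rw [hEeq]
      congr 2
      · push_cast; ring
      · push_cast; ring
end
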